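/- Let w be an overlap-free binary word with |w| ≥ 16, whose Restivo–Salemi factorization is w = u·μ(y)·v with y overlap-free and u,v ∈ {ε, 0, 1, 00, 11}. If u = aa for some letter a, then neither 0·w nor 1·w is overlap-free. -/

import Mathlib

/-- Thue–Morse morphism: μ(0)=01, μ(1)=10, encoding 0 = false, 1 = true. -/
def mu (w : List Bool) : List Bool := w.flatMap fun b => [b, !b]

/-- A word is an overlap if it has the form a·x·a·x·a for a letter a. -/
def IsOverlap (w : List Bool) : Prop :=
  ∃ (a : Bool) (x : List Bool), w = [a] ++ x ++ [a] ++ x ++ [a]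

/-- A word contains an overlap as a factor. -/
def HasOverlap (w : List Bool) : Prop := ∃ f, f <:+: w ∧ IsOverlap f

/-- A word is overlap-free if no factor is an overlap. -/
def OverlapFree (w : List Bool) : Prop := ∀ f, f <:+: w → ¬ IsOverlap f

/-!
Since `|w| ≥ 16` and `|v| ≤ 2`, `y` has at least two letters `b₀ b₁`, so `w` begins with
`a a b₀ b̄₀ b₁ b̄₁`. Avoiding the overlap `aaa` forces `b₀ = ā`, and then avoiding `a ā a ā a`
forces `b₁ = a`. Hence `w` begins with `a a ā a a ā`, and prepending `a` creates `aaa`, while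
prepending `ā` creates the overlap `ā·aa·ā·aa·ā`.
-/

lemma mu_cons (b : Bool) (y : List Bool) : mu (b :: y) = b :: (!b) :: mu y := rfl

lemma length_mu (y : List Bool) : (mu y).length = 2 * y.length := by
  induction y with
  | nil => rfl
  | cons b y ih => simp only [mu_cons, List.length_cons, ih]; ring

namespace OverlapFree

lemma of_cons {c : Bool} {w : List Bool} (hw : OverlapFree (c :: w)) : OverlapFree w :=
  fun f hf => hw f (List.infix_cons hf)

lemma eq_not_of_cons_cons {a b : Bool} {s : List Bool}
    (hw : OverlapFree (a :: a :: b :: s)) : b = !a := by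
  refine Bool.eq_not.mpr fun hb => ?_
  subst hb
  exact hw [b, b, b] ⟨[], s, rfl⟩ ⟨b, [], rfl⟩

lemma eq_of_cons_not_cons {a b : Bool} {s : List Bool}
    (hw : OverlapFree (a :: (!a) :: a :: b :: (!b) :: s)) : b = a := by
  by_contra hb
  rw [Bool.eq_not.mpr hb, Bool.not_not] at hw
  exact hw [a, !a, a, !a, a] ⟨[], s, rfl⟩ ⟨a, [!a], rfl⟩

lemma pair_append_mu_eq {a b₀ b₁ : Bool} {t v : List Bool}
    (hw : OverlapFree (a :: a :: mu (b₀ :: b₁ :: t) ++ v)) : b₀ = !a ∧ b₁ = a := by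
  obtain rfl := eq_not_of_cons_cons hw
  simp only [mu_cons, Bool.not_not, List.cons_append] at hw
  exact ⟨rfl, hw.of_cons.eq_of_cons_not_cons⟩

end OverlapFree

lemma not_overlapFree_cons_pair_append_mu (a c : Bool) (s : List Bool) :
    ¬ OverlapFree (c :: a :: a :: mu [!a, a] ++ s) := by
  intro hw
  simp only [mu_cons, Bool.not_not, List.cons_append] at hw
  rcases Bool.eq_or_eq_not c a with rfl | rfl
  · exact Bool.not_ne_self c hw.eq_not_of_cons_cons.symm
  · exact hw [!a, a, a, !a, a, a, !a] ⟨[], _, rfl⟩ ⟨!a, [a, a], rfl⟩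

theorem stmt_8_general (w u v y : List Bool) (a : Bool)
    (hof : OverlapFree w) (hlen : 16 ≤ w.length)
    (hfac : w = u ++ mu y ++ v)
    (hv : v ∈ [([] : List Bool), [false], [true], [false, false], [true, true]])
    (ha : u = [a, a]) :
    ∀ c : Bool, ¬ OverlapFree (c :: w) := by
  subst hfac ha
  have hv_len : v.length ≤ 2 := by
    simp only [List.mem_cons, List.not_mem_nil, or_false] at hv
    rcases hv with rfl | rfl | rfl | rfl | rfl <;> simp
  have hy_len : 2 ≤ y.length := by
    simp only [List.length_append, length_mu, List.length_cons, List.length_nil] at hlen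
    omega
  obtain ⟨b₀, b₁, t, rfl⟩ : ∃ b₀ b₁ t, y = b₀ :: b₁ :: t := by
    match y, hy_len with
    | b₀ :: b₁ :: t, _ => exact ⟨b₀, b₁, t, rfl⟩
  obtain ⟨hb₀, hb₁⟩ := OverlapFree.pair_append_mu_eq hof
  subst b₀ b₁
  intro c
  exact not_overlapFree_cons_pair_append_mu a c (mu t ++ v)

theorem stmt_8 (w u v y : List Bool) (a : Bool)
    (hof : OverlapFree w) (hlen : 16 ≤ w.length)
    (hfac : w = u ++ mu y ++ v) (hy : OverlapFree y)
    (hu : u ∈ [([] : List Bool), [false], [true], [false, false], [true, true]])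
    (hv : v ∈ [([] : List Bool), [false], [true], [false, false], [true, true]])
    (ha : u = [a, a]) :
    ∀ c : Bool, ¬ OverlapFree (c :: w) :=
  stmt_8_general w u v y a hof hlen hfac hv ha
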